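/- arXiv:1510.05799 — 2 statements merged into one kernel-verified Lean document; each statement's English description precedes it below -/
import Mathlib

section
/- For n ≥ 4: S≤m(n, n−3) = C(n,4)·C(n−2,2) if m ≥ 4; S≤3(n, n−3) = 15·C(n,6) + 10·C(n,5); and S≤2(n, n−3) = 15·C(n,6). -/
/-- Restricted Stirling number of the second kind: partitions of an `n`-set
into `k` blocks, each of size at most `m`. -/
noncomputable def restStirling (m n k : ℕ) : ℕ :=
  Nat.card {P : Finpartition (Finset.univ : Finset (Fin n)) //
    P.parts.card = k ∧ ∀ b ∈ P.parts, b.card ≤ m}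

/-- Associated Stirling number of the second kind: partitions of an `n`-set
into `k` blocks, each of size at least `m`. -/
noncomputable def assocStirling (m n k : ℕ) : ℕ :=
  Nat.card {P : Finpartition (Finset.univ : Finset (Fin n)) //
    P.parts.card = k ∧ ∀ b ∈ P.parts, m ≤ b.card}

/-- Ordinary Stirling number of the second kind. -/
noncomputable def ordStirling (n k : ℕ) : ℕ :=
  Nat.card {P : Finpartition (Finset.univ : Finset (Fin n)) // P.parts.card = k}

/-! A partition of an `n`-set into `n - d` blocks is determined by its blocks with more than one
element: they form a family of pairwise disjoint sets whose sizes exceed `1` by `d` in total,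
and the remaining points are singletons. For `d = 3` such a family is a single `4`-set, a `3`-set
with a disjoint `2`-set, or three disjoint pairs. These are counted by `C(n,4)`,
`C(n,3) C(n-3,2) = 10 C(n,5)` and `15 C(n,6)`, since a `6`-set has `15` pairings; the bound `m`
on the block sizes only decides which of the three kinds occur. -/

open Finset

namespace Finpartition

variable {α : Type*} [DecidableEq α]

lemma sum_card_sub_one_add_card_parts {s : Finset α} (P : Finpartition s) :
    ∑ b ∈ P.parts, (#b - 1) + #P.parts = #s := by
  rw [← P.sum_card_parts, card_eq_sum_ones, ← sum_add_distrib]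
  exact sum_congr rfl fun b hb => Nat.sub_add_cancel (P.nonempty_of_mem_parts hb).card_pos

variable [Fintype α]

def ofNontrivialParts (Q : Finset (Finset α)) (hQ : (Q : Set (Finset α)).PairwiseDisjoint id)
    (hQ₀ : ∅ ∉ Q) : Finpartition (univ : Finset α) where
  parts := Q ∪ (⊥ : Finpartition (univ \ Q.sup id)).parts
  supIndep := by
    rw [supIndep_iff_pairwiseDisjoint, coe_union]
    refine hQ.union (⊥ : Finpartition _).disjoint fun b hb c hc _ => ?_
    exact disjoint_sdiff.mono (le_sup (f := id) hb) ((⊥ : Finpartition _).le hc)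
  sup_parts := by
    rw [sup_union, (⊥ : Finpartition _).sup_parts, sup_eq_union, union_sdiff_self_eq_union,
      union_eq_right.2 (subset_univ _)]
  bot_notMem h := (mem_union.1 h).elim hQ₀ (⊥ : Finpartition _).bot_notMem

lemma parts_eq_filter_union (P : Finpartition (univ : Finset α)) :
    P.parts = {b ∈ P.parts | 1 < #b} ∪
      (⊥ : Finpartition (univ \ {b ∈ P.parts | 1 < #b}.sup id)).parts := by
  ext b
  simp only [mem_union, mem_filter, mem_bot_iff, mem_sdiff, mem_univ, true_and, mem_sup, id]
  constructor
  · intro hb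
    by_cases h : 1 < #b
    · exact .inl ⟨hb, h⟩
    · have := (P.nonempty_of_mem_parts hb).card_pos
      obtain ⟨a, rfl⟩ := (card_eq_one (s := b)).1 (by omega)
      refine .inr ⟨a, fun ⟨c, ⟨hc, hc1⟩, hac⟩ => ?_, rfl⟩
      rw [← P.eq_of_mem_parts hb hc (mem_singleton_self a) hac, card_singleton] at hc1
      exact lt_irrefl _ hc1
  · rintro (⟨hb, -⟩ | ⟨a, ha, rfl⟩)
    · exact hb
    · obtain ⟨c, hc, hac⟩ := P.exists_mem (mem_univ a)
      have hc1 : ¬ 1 < #c := fun h => ha ⟨c, ⟨hc, h⟩, hac⟩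
      rwa [eq_singleton_iff_unique_mem.2
        ⟨hac, fun x hx => card_le_one.1 (not_lt.1 hc1) x hx a hac⟩] at hc

def equivNontrivialParts : Finpartition (univ : Finset α) ≃
    {Q : Finset (Finset α) // (Q : Set (Finset α)).PairwiseDisjoint id ∧ ∀ b ∈ Q, 1 < #b} where
  toFun P := ⟨{b ∈ P.parts | 1 < #b}, P.disjoint.subset (filter_subset _ _),
    fun _ hb => (mem_filter.1 hb).2⟩
  invFun Q := ofNontrivialParts Q.1 Q.2.1 fun h => by simpa using Q.2.2 ∅ h
  left_inv P := by ext1; exact (parts_eq_filter_union P).symm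
  right_inv Q := by
    refine Subtype.ext ?_
    simp only [ofNontrivialParts]
    rw [filter_union, filter_true_of_mem Q.2.2, union_eq_left]
    intro b hb
    obtain ⟨a, -, rfl⟩ := mem_bot_iff.1 (mem_filter.1 hb).1
    simp at hb

end Finpartition

-- Makes `pairings` computable, so that the pairings of `Fin 6` can be counted by `decide`.
instance {α : Type*} [DecidableEq α] (Q : Finset (Finset α)) :
    Decidable ((Q : Set (Finset α)).PairwiseDisjoint id) :=
  decidable_of_iff (∀ a ∈ Q, ∀ b ∈ Q, a ≠ b → Disjoint a b) Iff.rfl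

def blockFamilies (α : Type*) [Fintype α] [DecidableEq α] (m d : ℕ) :
    Finset (Finset (Finset α)) :=
  {Q | (Q : Set (Finset α)).PairwiseDisjoint id ∧ (∀ b ∈ Q, 1 < #b ∧ #b ≤ m) ∧
    ∑ b ∈ Q, (#b - 1) = d}

section BlockFamilies

variable {α : Type*} [Fintype α] [DecidableEq α]

theorem card_finpartition_eq_card_blockFamilies {m : ℕ} (d : ℕ) (hm : 1 ≤ m) :
    Nat.card {P : Finpartition (univ : Finset α) //
      #P.parts + d = Fintype.card α ∧ ∀ b ∈ P.parts, #b ≤ m} = #(blockFamilies α m d) := by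
  let q (Q : Finset (Finset α)) := ∑ b ∈ Q, (#b - 1) = d ∧ ∀ b ∈ Q, #b ≤ m
  have hq (P : Finpartition (univ : Finset α)) :
      (#P.parts + d = Fintype.card α ∧ ∀ b ∈ P.parts, #b ≤ m) ↔
        q (Finpartition.equivNontrivialParts P).1 := by
    have hsum := P.sum_card_sub_one_add_card_parts
    rw [← sum_filter_of_ne (p := fun b => 1 < #b) fun b _ h => by omega, card_univ] at hsum
    simp only [q, Finpartition.equivNontrivialParts, Equiv.coe_fn_mk, mem_filter, and_imp]
    refine and_congr (by omega) ⟨fun h b hb _ => h b hb, fun h b hb => ?_⟩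
    by_cases hb1 : 1 < #b
    exacts [h b hb hb1, by omega]
  rw [Nat.card_congr ((Finpartition.equivNontrivialParts.subtypeEquiv hq).trans
    (Equiv.subtypeSubtypeEquivSubtypeInter _ q)), ← Nat.card_eq_finsetCard]
  refine Nat.card_congr (Equiv.subtypeEquivRight fun Q => ?_)
  simp only [blockFamilies, mem_filter, mem_univ, true_and, q]
  constructor
  · rintro ⟨⟨hd, h1⟩, hs, hm⟩
    exact ⟨hd, fun b hb => ⟨h1 b hb, hm b hb⟩, hs⟩
  · rintro ⟨hd, h, hs⟩
    exact ⟨⟨hd, fun b hb => (h b hb).1⟩, hs, fun b hb => (h b hb).2⟩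

theorem restStirling_sub_eq_card_blockFamilies {m n d : ℕ} (hm : 1 ≤ m) (hd : d ≤ n) :
    restStirling m n (n - d) = #(blockFamilies (Fin n) m d) := by
  rw [restStirling, ← card_finpartition_eq_card_blockFamilies d hm]
  refine Nat.card_congr (Equiv.subtypeEquivRight fun P => ?_)
  have := P.card_parts_le_card
  rw [card_univ, Fintype.card_fin] at this
  rw [Fintype.card_fin]
  exact and_congr_left' (by omega)

end BlockFamilies

section Pairings

variable {α β : Type*} [DecidableEq α] [DecidableEq β]

def pairings (k : ℕ) (s : Finset α) : Finset (Finset (Finset α)) :=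
  {Q ∈ (s.powersetCard 2).powersetCard k | (Q : Set (Finset α)).PairwiseDisjoint id}

lemma mem_pairings {k : ℕ} {s : Finset α} {Q : Finset (Finset α)} :
    Q ∈ pairings k s ↔
      #Q = k ∧ (∀ b ∈ Q, b ⊆ s ∧ #b = 2) ∧ (Q : Set (Finset α)).PairwiseDisjoint id := by
  simp only [pairings, mem_filter, mem_powersetCard, subset_iff, and_assoc]
  tauto

lemma card_sup_of_mem_pairings {k : ℕ} {s : Finset α} {Q : Finset (Finset α)}
    (hQ : Q ∈ pairings k s) : #(Q.sup id) = 2 * k := by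
  obtain ⟨hk, h2, hd⟩ := mem_pairings.1 hQ
  rw [sup_eq_biUnion, card_biUnion hd,
    sum_congr rfl fun b hb => show #(id b) = 2 from (h2 b hb).2, sum_const, hk, smul_eq_mul,
    mul_comm]

lemma pairings_map (k : ℕ) (e : α ↪ β) (s : Finset α) :
    pairings k (s.map e) =
      (pairings k s).map (mapEmbedding (mapEmbedding e).toEmbedding).toEmbedding := by
  rw [pairings, powersetCard_map, powersetCard_map, filter_map, pairings]
  congr 1
  refine filter_congr fun Q _ => ?_
  simp only [Function.comp_apply, RelEmbedding.coe_toEmbedding, mapEmbedding_apply, coe_map,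
    (mapEmbedding e).injective.injOn.pairwiseDisjoint_image]
  exact forall₂_congr fun a _ => forall₂_congr fun b _ => imp_congr_right fun _ =>
    disjoint_map e

lemma card_pairings_eq_card_pairings_fin (k : ℕ) (s : Finset α) :
    #(pairings k s) = #(pairings k (univ : Finset (Fin #s))) := by
  let e : Fin #s ↪ α := s.equivFin.symm.toEmbedding.trans (Function.Embedding.subtype _)
  have he : univ.map e = s := by
    rw [← map_map, map_univ_equiv, univ_eq_attach, attach_map_val]
  rw [← he, pairings_map, card_map, he]

lemma filter_sup_pairings_eq {k : ℕ} {s T : Finset α} (hT : T ∈ s.powersetCard (2 * k)) :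
    {Q ∈ pairings k s | Q.sup id = T} = pairings k T := by
  obtain ⟨hTs, hTk⟩ := mem_powersetCard.1 hT
  ext Q
  simp only [mem_filter, mem_pairings]
  constructor
  · rintro ⟨⟨hk, h2, hd⟩, rfl⟩
    exact ⟨hk, fun b hb => ⟨le_sup (f := id) hb, (h2 b hb).2⟩, hd⟩
  · intro hQ
    have hsup : Q.sup id ⊆ T := Finset.sup_le fun b hb => (hQ.2.1 b hb).1
    refine ⟨⟨hQ.1, fun b hb => ⟨(hQ.2.1 b hb).1.trans hTs, (hQ.2.1 b hb).2⟩, hQ.2.2⟩, ?_⟩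
    refine eq_of_subset_of_card_le hsup ?_
    rw [hTk, card_sup_of_mem_pairings (mem_pairings.2 hQ)]

theorem card_pairings (k : ℕ) (s : Finset α) :
    #(pairings k s) = (#s).choose (2 * k) * #(pairings k (univ : Finset (Fin (2 * k)))) := by
  have hmaps : (pairings k s : Set (Finset (Finset α))).MapsTo (·.sup id)
      (s.powersetCard (2 * k)) := fun Q hQ => by
    rw [mem_coe, mem_pairings] at hQ
    exact mem_powersetCard.2 ⟨Finset.sup_le fun b hb => (hQ.2.1 b hb).1,
      card_sup_of_mem_pairings (mem_pairings.2 hQ)⟩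
  rw [card_eq_sum_card_fiberwise hmaps, ← card_powersetCard]
  refine sum_const_nat fun T hT => ?_
  rw [filter_sup_pairings_eq hT, card_pairings_eq_card_pairings_fin, (mem_powersetCard.1 hT).2]

lemma card_pairings_three_fin_six : #(pairings 3 (univ : Finset (Fin 6))) = 15 := by
  decide

end Pairings

def blockPairs (α : Type*) [Fintype α] [DecidableEq α] (i j : ℕ) :
    Finset (Finset (Finset α)) :=
  ((powersetCard i univ).sigma fun A => powersetCard j (univ \ A)).image fun p => {p.1, p.2}

section ExcessThree

variable {α : Type*} [Fintype α] [DecidableEq α]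

lemma mem_blockPairs {i j : ℕ} {Q : Finset (Finset α)} :
    Q ∈ blockPairs α i j ↔ ∃ A B, #A = i ∧ #B = j ∧ Disjoint A B ∧ {A, B} = Q := by
  simp only [blockPairs, mem_image, mem_sigma, mem_powersetCard, subset_sdiff, subset_univ,
    true_and, Sigma.exists]
  exact exists₂_congr fun A B => by rw [disjoint_comm]; tauto

theorem card_blockPairs {i j : ℕ} (hij : i ≠ j) :
    #(blockPairs α i j) = (Fintype.card α).choose i * (Fintype.card α - i).choose j := by
  rw [blockPairs, card_image_of_injOn, card_sigma, ← card_univ, ← card_powersetCard i]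
  · refine sum_const_nat fun A hA => ?_
    rw [card_powersetCard, card_sdiff_of_subset (subset_univ A), (mem_powersetCard_univ.1 hA)]
  · rintro ⟨A, B⟩ hAB ⟨A', B'⟩ hAB' h
    simp only [coe_sigma, Set.mem_sigma_iff, mem_coe, mem_powersetCard] at hAB hAB' h
    have hA : A ∈ ({A', B'} : Finset (Finset α)) := h ▸ mem_insert_self _ _
    have hB : B ∈ ({A', B'} : Finset (Finset α)) := h ▸ mem_insert_of_mem (mem_singleton_self _)
    simp only [mem_insert, mem_singleton] at hA hB
    rcases hA with rfl | rfl <;> rcases hB with rfl | rfl <;> first | rfl | omega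

lemma blockFamilies_three_cases {m : ℕ} {Q : Finset (Finset α)}
    (hQ : Q ∈ blockFamilies α m 3) :
    (Q ∈ (powersetCard 4 univ).map ⟨({·}), singleton_injective⟩ ∧ 4 ≤ m) ∨
      (Q ∈ blockPairs α 3 2 ∧ 3 ≤ m) ∨ (Q ∈ pairings 3 univ ∧ 2 ≤ m) := by
  simp only [blockFamilies, mem_filter, mem_univ, true_and] at hQ
  simp only [mem_map, mem_powersetCard_univ, mem_blockPairs, mem_pairings, subset_univ,
    true_and, Function.Embedding.coeFn_mk]
  obtain ⟨hd, hb, hs⟩ := hQ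
  have h1 : ∀ b ∈ Q, 1 ≤ #b - 1 := fun b h => by have := (hb b h).1; omega
  have hQ : #Q ≤ 3 := by simpa [← hs] using card_nsmul_le_sum Q (fun b => #b - 1) 1 h1
  obtain h | h | h | h : #Q = 0 ∨ #Q = 1 ∨ #Q = 2 ∨ #Q = 3 := by omega
  · simp [card_eq_zero.1 h] at hs
  · obtain ⟨A, rfl⟩ := card_eq_one.1 h
    rw [sum_singleton] at hs
    have := hb A (mem_singleton_self A)
    exact .inl ⟨⟨A, by omega, rfl⟩, by omega⟩
  · obtain ⟨A, B, hAB, rfl⟩ := card_eq_two.1 h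
    rw [sum_pair hAB] at hs
    have hA := hb A (by simp)
    have hB := hb B (by simp)
    have hd' : Disjoint A B := hd (by simp) (by simp) hAB
    obtain ⟨hA3, hB2⟩ | ⟨hA2, hB3⟩ : #A = 3 ∧ #B = 2 ∨ #A = 2 ∧ #B = 3 := by omega
    · exact .inr <| .inl ⟨⟨A, B, hA3, hB2, hd', rfl⟩, by omega⟩
    · exact .inr <| .inl ⟨⟨B, A, hB3, hA2, hd'.symm, pair_comm _ _⟩, by omega⟩
  · have h2 : ∀ b ∈ Q, #b = 2 := fun b hb' => by
      have := (sum_eq_sum_iff_of_le h1).1 (by rw [sum_const, hs, h]; rfl) b hb'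
      omega
    obtain ⟨b, hb'⟩ := card_pos.1 (by omega : 0 < #Q)
    exact .inr <| .inr ⟨⟨h, h2, hd⟩, h2 b hb' ▸ (hb b hb').2⟩

lemma mem_blockFamilies_three {m : ℕ} {Q : Finset (Finset α)} :
    Q ∈ blockFamilies α m 3 ↔
      (Q ∈ (powersetCard 4 univ).map ⟨({·}), singleton_injective⟩ ∧ 4 ≤ m) ∨
      (Q ∈ blockPairs α 3 2 ∧ 3 ≤ m) ∨ (Q ∈ pairings 3 univ ∧ 2 ≤ m) := by
  refine ⟨blockFamilies_three_cases, ?_⟩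
  simp only [blockFamilies, mem_filter, mem_univ, true_and, mem_map, mem_powersetCard_univ,
    mem_blockPairs, mem_pairings, subset_univ, Function.Embedding.coeFn_mk]
  rintro (⟨⟨A, hA, rfl⟩, hm⟩ | ⟨⟨A, B, hA, hB, hAB, rfl⟩, hm⟩ | ⟨⟨hk, h2, hd⟩, hm⟩)
  · simp [hA, hm]
  · have hne : A ≠ B := fun h => by subst h; omega
    refine ⟨?_, ?_, by rw [sum_pair hne, hA, hB]⟩
    · rw [coe_pair]
      exact Set.pairwise_pair_of_symm.2 fun _ => hAB
    · simp only [mem_insert, mem_singleton, forall_eq_or_imp, forall_eq]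
      omega
  · refine ⟨hd, fun b hb => ?_, ?_⟩
    · rw [h2 b hb]
      exact ⟨one_lt_two, hm⟩
    · rw [sum_congr rfl fun b hb => show #b - 1 = 1 by rw [h2 b hb], sum_const, hk]
      rfl

theorem card_blockFamilies_three (m : ℕ) :
    #(blockFamilies α m 3) =
      (if 4 ≤ m then (Fintype.card α).choose 4 else 0) +
      (if 3 ≤ m then (Fintype.card α).choose 3 * (Fintype.card α - 3).choose 2 else 0) +
      (if 2 ≤ m then (Fintype.card α).choose 6 * 15 else 0) := by
  set S₄ := (powersetCard 4 (univ : Finset α)).map ⟨({·}), singleton_injective⟩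
  have hdisj {S T : Finset (Finset (Finset α))} {i j : ℕ} (hij : i ≠ j) (hS : ∀ Q ∈ S, #Q = i)
      (hT : ∀ Q ∈ T, #Q = j) : Disjoint S T :=
    disjoint_left.2 fun Q hQS hQT => hij ((hS Q hQS).symm.trans (hT Q hQT))
  have h₄ : ∀ Q ∈ S₄, #Q = 1 := by simp [S₄]
  have h₃₂ : ∀ Q ∈ blockPairs α 3 2, #Q = 2 := fun Q hQ => by
    obtain ⟨A, B, hA, hB, -, rfl⟩ := mem_blockPairs.1 hQ
    exact card_pair fun h => by subst h; omega
  have h₂₂₂ : ∀ Q ∈ pairings 3 (univ : Finset α), #Q = 3 := fun Q hQ => (mem_pairings.1 hQ).1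
  have hF : blockFamilies α m 3 = ({Q ∈ S₄ | 4 ≤ m} ∪ {Q ∈ blockPairs α 3 2 | 3 ≤ m}) ∪
      {Q ∈ pairings 3 (univ : Finset α) | 2 ≤ m} := by
    ext Q
    simp only [mem_union, mem_filter, mem_blockFamilies_three, or_assoc, S₄]
  rw [hF, card_union_of_disjoint, card_union_of_disjoint]
  · simp only [filter_const, apply_ite card, card_empty, S₄, card_map, card_powersetCard,
      card_univ, card_blockPairs (by decide : 3 ≠ 2), card_pairings 3 (univ : Finset α),
      Nat.reduceMul, card_pairings_three_fin_six]
  · exact disjoint_filter_filter (hdisj (by decide) h₄ h₃₂)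
  · exact disjoint_union_left.2 ⟨disjoint_filter_filter (hdisj (by decide) h₄ h₂₂₂),
      disjoint_filter_filter (hdisj (by decide) h₃₂ h₂₂₂)⟩

end ExcessThree

theorem Nat.choose_three_mul_choose_sub_three_two (n : ℕ) :
    n.choose 3 * (n - 3).choose 2 = 10 * n.choose 5 := by
  rw [← Nat.choose_mul (by norm_num : 3 ≤ 5), mul_comm]
  rfl

theorem Nat.choose_four_mul_choose_sub_two_two {n : ℕ} (hn : 4 ≤ n) :
    n.choose 4 * (n - 2).choose 2 = n.choose 4 + 10 * n.choose 5 + 15 * n.choose 6 := by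
  obtain ⟨k, rfl⟩ := Nat.exists_eq_add_of_le' hn
  have h6 : (k + 4).choose 6 * 15 = (k + 4).choose 4 * k.choose 2 := by
    simpa [show Nat.choose 6 4 = 15 from rfl] using
      Nat.choose_mul (n := k + 4) (by norm_num : 4 ≤ 6)
  have h5 : (k + 4).choose 5 * 5 = (k + 4).choose 4 * k := by
    simpa using Nat.choose_succ_right_eq (k + 4) 4
  have h2 : (k + 2).choose 2 = k.choose 2 + 2 * k + 1 := by
    simp only [Nat.choose_succ_succ, Nat.choose_one_right, Nat.choose_zero_right]
    ring
  rw [show k + 4 - 2 = k + 2 by omega, h2]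
  linear_combination h6.symm + 2 * h5.symm

theorem restStirling_sub_three_eq {m n : ℕ} (hm : 1 ≤ m) (hn : 3 ≤ n) :
    restStirling m n (n - 3) =
      (if 4 ≤ m then n.choose 4 else 0) + (if 3 ≤ m then 10 * n.choose 5 else 0) +
        (if 2 ≤ m then 15 * n.choose 6 else 0) := by
  rw [restStirling_sub_eq_card_blockFamilies hm hn, card_blockFamilies_three, Fintype.card_fin,
    Nat.choose_three_mul_choose_sub_three_two, mul_comm _ 15]

theorem restStirling_sub_three (m n : ℕ) (hn : 4 ≤ n) :
    (4 ≤ m → restStirling m n (n - 3) = n.choose 4 * (n - 2).choose 2) ∧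
    restStirling 3 n (n - 3) = 15 * n.choose 6 + 10 * n.choose 5 ∧
    restStirling 2 n (n - 3) = 15 * n.choose 6 := by
  refine ⟨fun hm => ?_, ?_, ?_⟩
  · rw [restStirling_sub_three_eq (by omega) (by omega), if_pos hm, if_pos (by omega),
      if_pos (by omega), Nat.choose_four_mul_choose_sub_two_two hn]
  · rw [restStirling_sub_three_eq (by omega) (by omega)]
    simp [add_comm]
  · rw [restStirling_sub_three_eq (by omega) (by omega)]
    simp
end

section
/- Let μ ≤ 0 be an integer, m ≥ 1, and p a prime with p > m. Define the restricted poly-Bernoulli number B^{(μ)}_{n,≤m} = ∑_{k=0}^{n} (−1)^{n−k} · k! · (k+1)^{|μ|} · S≤m(n, k). Then B^{(μ)}_{p,≤m} ≡ 0 (mod p). -/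
/-!
The cyclic group `ℤ/p` acts on the partitions of `Fin p` by translation, preserving the number
of blocks and their sizes, so the number of partitions into `k` blocks of size at most `m` is
congruent mod `p` to the number of translation-invariant ones. For `0 < k < p` there are none:
the orbit of a block has `p`-power size and lies among the `k < p` blocks, so the block is
invariant, hence all of `Fin p`, which has more than `m` elements. The terms `k = 0` and `k = p`
of the sum vanish mod `p` because `S≤m(p, 0) = 0` and `p ∣ p!`.
-/

open Finset Pointwise MulAction

variable {G α : Type*} [Group G] [MulAction G α] [DecidableEq α] [Fintype α]

def Finset.smulOrderIso (g : G) : Finset α ≃o Finset α where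
  toEquiv := MulAction.toPerm g
  map_rel_iff' := smul_finset_subset_smul_finset_iff

lemma Finset.eq_univ_of_forall_smul_eq [IsPretransitive G α] {b : Finset α} (hb : b.Nonempty)
    (h : ∀ g : G, g • b = b) : b = univ := by
  obtain ⟨x, hx⟩ := hb
  refine eq_univ_of_forall fun y => ?_
  obtain ⟨g, rfl⟩ := exists_smul_eq G x y
  rw [← h g]
  exact smul_mem_smul_finset hx

namespace Finpartition

instance : SMul G (Finpartition (univ : Finset α)) where
  smul g P := (P.map (smulOrderIso g)).copy smul_finset_univ

@[simp]
lemma parts_smul (g : G) (P : Finpartition (univ : Finset α)) :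
    (g • P).parts = g • P.parts := by
  change P.parts.map _ = _
  rw [map_eq_image]
  rfl

instance : MulAction G (Finpartition (univ : Finset α)) where
  one_smul P := by ext1; simp
  mul_smul g h P := by ext1; simp [mul_smul]

variable (G α) in
def restricted (m k : ℕ) : SubMulAction G (Finpartition (univ : Finset α)) where
  carrier := {P | #P.parts = k ∧ ∀ b ∈ P.parts, #b ≤ m}
  smul_mem' g P hP := by
    refine ⟨by simp [card_smul_finset, hP.1], fun b hb => ?_⟩
    obtain ⟨c, hc, rfl⟩ := mem_smul_finset.mp (parts_smul g P ▸ hb)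
    simpa [card_smul_finset] using hP.2 c hc

lemma orbit_subset_parts {P : Finpartition (univ : Finset α)} (hP : ∀ g : G, g • P = P)
    {b : Finset α} (hb : b ∈ P.parts) : orbit G b ⊆ P.parts := by
  rintro _ ⟨g, rfl⟩
  rw [← hP g, parts_smul, coe_smul_finset]
  exact Set.smul_mem_smul_set hb

lemma smul_eq_of_card_parts_lt {p : ℕ} [Fact p.Prime] (hG : IsPGroup p G)
    {P : Finpartition (univ : Finset α)} (hP : ∀ g : G, g • P = P) (hPp : #P.parts < p)
    {b : Finset α} (hb : b ∈ P.parts) (g : G) : g • b = b := by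
  have horbit : Nat.card (orbit G b) ≤ #P.parts :=
    calc Nat.card (orbit G b) ≤ Nat.card (P.parts : Set (Finset α)) :=
          Nat.card_mono P.parts.finite_toSet (orbit_subset_parts hP hb)
      _ = #P.parts := by rw [Nat.card_coe_set_eq, Set.ncard_coe_finset]
  obtain ⟨n, hn⟩ := hG.card_orbit b
  have hn0 : n = 0 := by
    have : p ^ n < p ^ 1 := by rw [pow_one]; omega
    have := (Nat.pow_lt_pow_iff_right (Fact.out : p.Prime).one_lt).mp this
    omega
  have : Subsingleton (orbit G b) :=
    (Nat.card_eq_one_iff_unique.mp (by rw [hn, hn0, pow_zero])).1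
  exact congrArg Subtype.val
    (Subsingleton.elim (⟨g • b, mem_orbit b g⟩ : orbit G b) ⟨b, mem_orbit_self b⟩)

theorem prime_dvd_card_restricted [IsPretransitive G α] {p : ℕ} [Fact p.Prime]
    (hG : IsPGroup p G) {m k : ℕ} (hm : m < Fintype.card α) (hk0 : 0 < k) (hkp : k < p) :
    p ∣ Nat.card (restricted G α m k) := by
  have hfix : fixedPoints G (restricted G α m k) = ∅ := by
    refine Set.eq_empty_of_forall_notMem fun ⟨P, hPk, hPm⟩ hP => ?_
    have hP' : ∀ g : G, g • P = P := fun g => congrArg Subtype.val (hP g)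
    obtain ⟨b, hb⟩ : P.parts.Nonempty := card_pos.mp (hPk ▸ hk0)
    have hbuniv : b = univ := eq_univ_of_forall_smul_eq (P.nonempty_of_mem_parts hb)
      (smul_eq_of_card_parts_lt hG hP' (hPk ▸ hkp) hb)
    have := hPm b hb
    rw [hbuniv, card_univ] at this
    omega
  simpa [hfix, Nat.modEq_zero_iff_dvd] using
    hG.card_modEq_card_fixedPoints (restricted G α m k)

end Finpartition

theorem restStirling_prime_dvd {m p k : ℕ} (hp : p.Prime) (hmp : m < p) (hk0 : 0 < k)
    (hkp : k < p) : p ∣ restStirling m p k := by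
  have := Fact.mk hp
  have : NeZero p := ⟨hp.ne_zero⟩
  have hG : IsPGroup p (Multiplicative (Fin p)) := IsPGroup.of_card (n := 1) (by simp)
  exact Finpartition.prime_dvd_card_restricted (α := Fin p) hG (by simpa using hmp) hk0 hkp

lemma restStirling_zero_right {m n : ℕ} (hn : n ≠ 0) : restStirling m n 0 = 0 := by
  have : NeZero n := ⟨hn⟩
  refine Nat.card_eq_zero.mpr (Or.inl ⟨fun ⟨P, hP, _⟩ => ?_⟩)
  exact univ_nonempty.ne_empty (P.parts_eq_empty_iff.mp (card_eq_zero.mp hP))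

theorem restPolyBernoulli_prime_mod_general (μ : ℤ) (p m : ℕ) (hp : p.Prime) (hmp : m < p) :
    (∑ k ∈ Finset.range (p + 1),
        (-1 : ℤ) ^ (p - k) * k.factorial * (k + 1) ^ μ.natAbs * restStirling m p k) ≡
      0 [ZMOD p] := by
  rw [Int.modEq_zero_iff_dvd]
  refine dvd_sum fun k hk => ?_
  obtain rfl | hk0 := k.eq_zero_or_pos
  · simp [restStirling_zero_right hp.ne_zero]
  obtain hkp | hkp := (Nat.lt_succ_iff.mp (mem_range.mp hk)).lt_or_eq
  · exact dvd_mul_of_dvd_right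
      (Int.natCast_dvd_natCast.mpr (restStirling_prime_dvd hp hmp hk0 hkp)) _
  · have hfact : (p : ℤ) ∣ (k.factorial : ℤ) :=
      Int.natCast_dvd_natCast.mpr (Nat.dvd_factorial hp.pos hkp.ge)
    exact ((hfact.mul_left _).mul_right _).mul_right _

theorem restPolyBernoulli_prime_mod (μ : ℤ) (hμ : μ ≤ 0) (p m : ℕ) (hp : p.Prime)
    (hm : 1 ≤ m) (hmp : m < p) :
    (∑ k ∈ Finset.range (p + 1),
        (-1 : ℤ) ^ (p - k) * k.factorial * (k + 1) ^ μ.natAbs * restStirling m p k) ≡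
      0 [ZMOD p] :=
  restPolyBernoulli_prime_mod_general μ p m hp hmp
end
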